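/- arXiv:1306.4197 — 2 statements merged into one kernel-verified Lean document; each statement's English description precedes it below -/
import Mathlib

section
/- Let (P_t)_{t∈ℕ} be a Rota–Baxter family of endomorphisms of a commutative algebra B, i.e. P_s(a)·P_t(b) = P_{s+t}(P_s(a)·b + a·P_t(b) − a·b) for all s,t ∈ ℕ and a,b ∈ B. Let H be a graded connected commutative bialgebra and φ : H → B a character. Define φ_-(x) = −P_{|x|}(φ̄(x)) for homogeneous x of positive degree |x|, where φ̄(x) = φ(x) + ∑_{(x)} φ_-(x')φ(x'') (sum over the reduced coproduct), and φ_-(1) = 1. Then φ_- is a character: φ_-(xy) = φ_-(x)φ_-(y) for homogeneous x, y of positive degree. -/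
/-!
Write `φ̄ = φ₋ * φ − φ₋` (convolution), so that `φ₋(x) = −P_{|x|}(φ̄ x)`. For `x, y` of degrees
`m, n` the Rota–Baxter family identity gives
`φ₋(x) φ₋(y) = −P_{m+n}((φ₋ * φ)(x) (φ₋ * φ)(y) − φ₋(x) φ₋(y))`, so by the recursion for `φ₋(xy)`
it suffices that `(φ₋ * φ)(xy) − (φ₋ * φ)(x) (φ₋ * φ)(y) = φ₋(xy) − φ₋(x) φ₋(y)`.
Since `Δ` is multiplicative and `φ₋ * ε = φ₋`, both sides are multiplicativity defects, of
`μ ∘ (φ₋ ⊗ φ)` and of `μ ∘ (φ₋ ⊗ ε)`, evaluated on `Δx, Δy`. On homogeneous tensors `a ⊗ b`,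
`c ⊗ d` these are the defect of `φ₋` on `(a, c)` times `φ(b) φ(d)`, resp. `ε(b) ε(d)`; by
induction on the degree and connectedness the first factor vanishes unless `b, d` have degree `0`,
where `φ = ε`.
-/

variable {R H B : Type*} [Field R] [CommRing H] [Bialgebra R H]
  [CommRing B] [Algebra R B]

noncomputable def conv (f g : H →ₗ[R] B) : H →ₗ[R] B :=
  (LinearMap.mul' R B).comp ((TensorProduct.map f g).comp
    (Coalgebra.comul : H →ₗ[R] TensorProduct R H H))

def IsCharacter (f : H →ₗ[R] B) : Prop :=
  f 1 = 1 ∧ ∀ x y : H, f (x * y) = f x * f y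

def Connected (ℬ : ℕ → Submodule R H) : Prop :=
  ℬ 0 ≤ Submodule.span R {(1 : H)}

def ComulGraded (ℬ : ℕ → Submodule R H) : Prop :=
  ∀ n : ℕ, ∀ x ∈ ℬ n, (Coalgebra.comul (R := R) x : TensorProduct R H H) ∈
    ⨆ (p : ℕ × ℕ) (_ : p.1 + p.2 = n),
      LinearMap.range (TensorProduct.map (ℬ p.1).subtype (ℬ p.2).subtype)

open TensorProduct

section TensorGrade

variable {S M N : Type*} [CommSemiring S] [AddCommMonoid M] [Module S M]
  [AddCommMonoid N] [Module S N]

def tensorGrade (ℬ : ℕ → Submodule S M) (n : ℕ) : Submodule S (M ⊗[S] M) :=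
  ⨆ (p : ℕ × ℕ) (_ : p.1 + p.2 = n), LinearMap.range (map (ℬ p.1).subtype (ℬ p.2).subtype)

theorem tensorGrade_le_ker {ℬ : ℕ → Submodule S M} {n : ℕ} {g : M ⊗[S] M →ₗ[S] N}
    (h : ∀ p : ℕ × ℕ, p.1 + p.2 = n → ∀ a ∈ ℬ p.1, ∀ b ∈ ℬ p.2, g (a ⊗ₜ b) = 0) :
    tensorGrade ℬ n ≤ LinearMap.ker g :=
  iSup₂_le fun p hp => LinearMap.range_le_ker_iff.2 <|
    TensorProduct.ext' fun a b => h p hp a a.2 b b.2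

theorem apply₂_eq_zero_of_mem_tensorGrade {ℬ : ℕ → Submodule S M} {m n : ℕ}
    {f : M ⊗[S] M →ₗ[S] M ⊗[S] M →ₗ[S] N}
    (h : ∀ p q : ℕ × ℕ, p.1 + p.2 = m → q.1 + q.2 = n → ∀ a ∈ ℬ p.1, ∀ b ∈ ℬ p.2,
      ∀ c ∈ ℬ q.1, ∀ d ∈ ℬ q.2, f (a ⊗ₜ b) (c ⊗ₜ d) = 0)
    {u v : M ⊗[S] M} (hu : u ∈ tensorGrade ℬ m) (hv : v ∈ tensorGrade ℬ n) : f u v = 0 := by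
  have hgen : ∀ p : ℕ × ℕ, p.1 + p.2 = m → ∀ a ∈ ℬ p.1, ∀ b ∈ ℬ p.2, f.flip v (a ⊗ₜ b) = 0 :=
    fun p hp a ha b hb => tensorGrade_le_ker (g := f (a ⊗ₜ b))
      (fun q hq c hc d hd => h p q hp hq a ha b hb c hc d hd) hv
  exact tensorGrade_le_ker hgen hu

end TensorGrade

section MulDefect

variable {S A C : Type*} [CommSemiring S] [NonUnitalNonAssocSemiring A] [Module S A]
  [SMulCommClass S A A] [IsScalarTower S A A] [NonUnitalNonAssocRing C] [Module S C]
  [SMulCommClass S C C] [IsScalarTower S C C]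

def mulDefect (Φ : A →ₗ[S] C) : A →ₗ[S] A →ₗ[S] C :=
  (LinearMap.mul S A).compr₂ Φ - (LinearMap.mul S C).compl₁₂ Φ Φ

@[simp]
theorem mulDefect_apply (Φ : A →ₗ[S] C) (u v : A) : mulDefect Φ u v = Φ (u * v) - Φ u * Φ v :=
  rfl

end MulDefect

section SpanOne

variable {S A C : Type*} [CommSemiring S] [Semiring A] [Algebra S A] [Semiring C] [Algebra S C]
  {f g : A →ₗ[S] C}

theorem map_mul_of_mem_span_one_left (hf : f 1 = 1) {a : A} (ha : a ∈ Submodule.span S {1})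
    (c : A) : f (a * c) = f a * f c := by
  obtain ⟨r, rfl⟩ := Submodule.mem_span_singleton.1 ha
  simp [hf]

theorem map_mul_of_mem_span_one_right (hf : f 1 = 1) (a : A) {c : A}
    (hc : c ∈ Submodule.span S {1}) : f (a * c) = f a * f c := by
  obtain ⟨r, rfl⟩ := Submodule.mem_span_singleton.1 hc
  simp [hf]

theorem eq_of_mem_span_one (h : f 1 = g 1) {a : A} (ha : a ∈ Submodule.span S {1}) :
    f a = g a :=
  LinearMap.eqOn_span (by simpa using h) ha

end SpanOne

theorem rotaBaxterFamily_mul_eq {S C ι : Type*} [CommSemiring S] [CommRing C] [Module S C] [Add ι]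
    {P : ι → C →ₗ[S] C}
    (hRBF : ∀ (s t : ι) (a b : C), P s a * P t b = P (s + t) (P s a * b + a * P t b - a * b))
    {s t : ι} {a b c u v w : C} (ha : a = -P s u) (hb : b = -P t v) (hc : c = -P (s + t) w)
    (hw : w = (a + u) * (b + v) - a * b) : c = a * b := by
  have hPu : P s u = -a := by rw [ha, neg_neg]
  have hPv : P t v = -b := by rw [hb, neg_neg]
  calc c = P (s + t) (P s u * v + u * P t v - u * v) := by
        rw [hc, hw, hPu, hPv, ← map_neg]; congr 1; ring
    _ = a * b := by rw [← hRBF, hPu, hPv, neg_mul_neg]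

theorem mulDefect_mul'_map_tmul {S A C : Type*} [CommSemiring S] [Semiring A] [Algebra S A]
    [CommRing C] [Algebra S C] (f : A →ₗ[S] C) {g : A →ₗ[S] C}
    (hg : ∀ b d, g (b * d) = g b * g d) (a b c d : A) :
    mulDefect (LinearMap.mul' S C ∘ₗ map f g) (a ⊗ₜ b) (c ⊗ₜ d)
      = mulDefect f a c * (g b * g d) := by
  simp only [mulDefect_apply, Algebra.TensorProduct.tmul_mul_tmul, LinearMap.comp_apply,
    map_tmul, LinearMap.mul'_apply, hg]
  ring

theorem map_mul_of_add_lt {ℬ : ℕ → Submodule R H} (hconn : Connected ℬ) {φm : H →ₗ[R] B}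
    (hφm1 : φm 1 = 1) {N : ℕ}
    (ih : ∀ p q : ℕ, 0 < p → 0 < q → p + q < N → ∀ a ∈ ℬ p, ∀ c ∈ ℬ q, φm (a * c) = φm a * φm c)
    {p q : ℕ} {a c : H} (ha : a ∈ ℬ p) (hc : c ∈ ℬ q) (hlt : p + q < N) :
    φm (a * c) = φm a * φm c := by
  rcases Nat.eq_zero_or_pos p with rfl | hp
  · exact map_mul_of_mem_span_one_left hφm1 (hconn ha) c
  rcases Nat.eq_zero_or_pos q with rfl | hq
  · exact map_mul_of_mem_span_one_right hφm1 a (hconn hc)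
  exact ih p q hp hq hlt a ha c hc

theorem conv_sub_mul_eq_sub_mul (ℬ : ℕ → Submodule R H) (hconn : Connected ℬ)
    (hgr : ComulGraded ℬ) {φ φm : H →ₗ[R] B} (hφ : IsCharacter φ) (hφm1 : φm 1 = 1) {m n : ℕ}
    (ih : ∀ p q : ℕ, 0 < p → 0 < q → p + q < m + n →
      ∀ a ∈ ℬ p, ∀ c ∈ ℬ q, φm (a * c) = φm a * φm c)
    {x y : H} (hx : x ∈ ℬ m) (hy : y ∈ ℬ n) :
    conv φm φ (x * y) - conv φm φ x * conv φm φ y = φm (x * y) - φm x * φm y := by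
  set ε : H →ₗ[R] B := (1 : WithConv (H →ₗ[R] B)).ofConv
  have hε : ∀ b d, ε (b * d) = ε b * ε d := by simp [ε]
  have hφε : ∀ b ∈ ℬ 0, φ b = ε b := fun b hb =>
    eq_of_mem_span_one (by simp [ε, hφ.1]) (hconn hb)
  have hK : ∀ z, (LinearMap.mul' R B ∘ₗ map φm ε) (Coalgebra.comul z) = φm z := fun z => by
    change (WithConv.toConv φm * 1).ofConv z = φm z
    rw [mul_one]
  have key := apply₂_eq_zero_of_mem_tensorGrade
    (f := mulDefect (LinearMap.mul' R B ∘ₗ map φm φ) - mulDefect (LinearMap.mul' R B ∘ₗ map φm ε))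
    (fun p q hp hq a ha b hb c hc d hd => by
      rw [LinearMap.sub_apply, LinearMap.sub_apply, mulDefect_mul'_map_tmul φm hφ.2,
        mulDefect_mul'_map_tmul φm hε, sub_eq_zero]
      by_cases hlt : p.1 + q.1 < m + n
      · simp [map_mul_of_add_lt hconn hφm1 ih ha hc hlt]
      · obtain ⟨hp₂, hq₂⟩ : p.2 = 0 ∧ q.2 = 0 := by omega
        rw [hφε b (hp₂ ▸ hb), hφε d (hq₂ ▸ hd)])
    (hgr m x hx) (hgr n y hy)
  rw [LinearMap.sub_apply, LinearMap.sub_apply, sub_eq_zero, mulDefect_apply, mulDefect_apply,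
    ← Bialgebra.comul_mul, hK, hK, hK] at key
  exact key

theorem counterterm_isCharacter_rotaBaxterFamily
    (ℬ : ℕ → Submodule R H) [GradedAlgebra ℬ]
    (hconn : Connected ℬ) (hgr : ComulGraded ℬ)
    (P : ℕ → B →ₗ[R] B)
    -- the Rota–Baxter family identity
    (hRBF : ∀ (s t : ℕ) (a b : B),
      P s a * P t b = P (s + t) (P s a * b + a * P t b - a * b))
    (φ φm : H →ₗ[R] B) (hφ : IsCharacter φ)
    (hφm1 : φm 1 = 1)
    -- the recursive definition φ₋(x) = −P_{|x|}(φ̄(x)) on homogeneous positive degrees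
    (hrec : ∀ n : ℕ, 0 < n → ∀ x ∈ ℬ n,
      φm x = - P n ((conv φm φ) x - φm x)) :
    ∀ (m n : ℕ), 0 < m → 0 < n → ∀ x ∈ ℬ m, ∀ y ∈ ℬ n,
      φm (x * y) = φm x * φm y := by
  intro m n
  induction hN : m + n using Nat.strong_induction_on generalizing m n with
  | _ N ih =>
  subst hN
  intro hm hn x hx y hy
  have hdefect := conv_sub_mul_eq_sub_mul ℬ hconn hgr hφ hφm1
    (fun p q hp hq hlt => ih (p + q) hlt p q rfl hp hq) hx hy
  exact rotaBaxterFamily_mul_eq hRBF (hrec m hm x hx) (hrec n hn y hy)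
    (hrec (m + n) (by omega) (x * y) (SetLike.mul_mem_graded hx hy))
    (by linear_combination hdefect)
end

section
/- With the notation of the indexed renormalization scheme: if (P_t)_{t∈ℕ} is a Rota–Baxter family on a commutative algebra B and φ_- is the character of counterterms defined via φ_-(x) = −P_{|x|}(φ̄(x)), then φ_+ := φ_- * φ, given on homogeneous x of positive degree by φ_+(x) = (Id − P_{|x|})(φ̄(x)), is also a character of H with values in B. -/
/- STATEMENT 10: Indexed renormalization scheme. If `(P_t)_{t∈ℕ}` is a Rota–Baxter
family on a commutative algebra `B` and `φ₋` is the character of counterterms defined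
by `φ₋(x) = −P_{|x|}(φ̄(x))`, then `φ₊ := φ₋ * φ`, which on homogeneous `x` of
positive degree equals `(Id − P_{|x|})(φ̄(x))`, is also a character. -/

variable {R H B : Type*} [Field R] [CommRing H] [Bialgebra R H]
  [CommRing B] [Algebra R B]

theorem mulmap_mul (φ φm : H →ₗ[R] B) (hφ : IsCharacter φ) (hφm : IsCharacter φm)
    (a b : TensorProduct R H H) :
    ((LinearMap.mul' R B).comp (TensorProduct.map φm φ)) (a * b)
      = ((LinearMap.mul' R B).comp (TensorProduct.map φm φ)) a *
        ((LinearMap.mul' R B).comp (TensorProduct.map φm φ)) b := by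
  set ψ := (LinearMap.mul' R B).comp (TensorProduct.map φm φ) with hψ
  induction a using TensorProduct.induction_on with
  | zero => simp
  | tmul x y =>
    induction b using TensorProduct.induction_on with
    | zero => simp
    | tmul x' y' =>
      simp only [hψ, Algebra.TensorProduct.tmul_mul_tmul, LinearMap.comp_apply,
        TensorProduct.map_tmul, LinearMap.mul'_apply, hφ.2, hφm.2]
      ring
    | add b₁ b₂ h1 h2 => simp only [mul_add, map_add, h1, h2]
  | add a₁ a₂ h1 h2 => simp only [add_mul, map_add, h1, h2]

theorem renormalized_isCharacter_rotaBaxterFamily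
    (ℬ : ℕ → Submodule R H) [GradedAlgebra ℬ]
    (hconn : Connected ℬ) (hgr : ComulGraded ℬ)
    (P : ℕ → B →ₗ[R] B)
    (hRBF : ∀ (s t : ℕ) (a b : B),
      P s a * P t b = P (s + t) (P s a * b + a * P t b - a * b))
    (φ φm : H →ₗ[R] B) (hφ : IsCharacter φ)
    (hφm : IsCharacter φm)
    (hrec : ∀ n : ℕ, 0 < n → ∀ x ∈ ℬ n,
      φm x = - P n ((conv φm φ) x - φm x)) :
    IsCharacter (conv φm φ) ∧
    -- on homogeneous positive-degree elements, φ₊ = (Id − P_{|x|})(φ̄)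
    (∀ n : ℕ, 0 < n → ∀ x ∈ ℬ n,
      (conv φm φ) x
        = ((conv φm φ) x - φm x) - P n ((conv φm φ) x - φm x)) := by
  have hchar : IsCharacter (conv φm φ) := by
    constructor
    · simp only [conv, LinearMap.comp_apply, Bialgebra.comul_one,
        Algebra.TensorProduct.one_def, TensorProduct.map_tmul, LinearMap.mul'_apply,
        hφ.1, hφm.1, one_mul]
    · intro x y
      have : (Coalgebra.comul (R := R) (x * y) : TensorProduct R H H)
          = Coalgebra.comul x * Coalgebra.comul y := by
        simpa -failIfUnchanged using map_mul (Bialgebra.comulAlgHom R H) x y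
      simp only [conv, LinearMap.comp_apply, this]
      exact mulmap_mul φ φm hφ hφm _ _
  refine ⟨hchar, fun n hn x hx => ?_⟩
  linear_combination hrec n hn x hx
end
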